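/- arXiv:2602.19680 — 3 statements merged into one kernel-verified Lean document; each statement's English description precedes it below -/
import Mathlib

section
/- Let M ⊆ E be a matching in G = (V,E), and suppose for each i ∈ F, each unmatched edge e' ∈ E \ M, and each adjacent matched edge e ∈ N(e') := {e ∈ M : e ∩ e' ≠ ∅} we have nonnegative transfer amounts τ^i_{e'→e} with Σ_{e ∈ N(e')} τ^i_{e'→e} = x_{i,e'}, and define x̃_{i,e} := x_{i,e} + Σ_{e' ∈ N(e)} τ^i_{e'→e} for e ∈ M and x̃_{i,e'} := 0 for e' ∉ M. If additionally x̃_e := Σ_i x̃_{i,e} ≤ 1 for all e ∈ M, then Σ_i Σ_{e∈E} d(i,e)·x̃_{i,e} ≤ 2·Σ_i Σ_{e∈E} d(i,e)·x_{i,e} + Σ_{e∈M} d(e). -/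
open scoped Classical

/-- `M` is a matching using only edges from `E`. -/
def IsMatchingIn {V : Type*} (E M : Finset (Sym2 V)) : Prop :=
  M ⊆ E ∧ ∀ e₁ ∈ M, ∀ e₂ ∈ M, e₁ ≠ e₂ → ∀ v : V, v ∈ e₁ → v ∉ e₂

/-- Rerouting cost bound. If nonnegative transfer amounts
`τ^i_{e'→e}` (from unmatched edges `e'` to adjacent matched edges `e ∈ N(e')`)
fully account for `x_{i,e'}` on unmatched edges, `x̃` is defined by adding the
transferred amounts onto matched edges (and zero elsewhere), and
`x̃_e := Σ_i x̃_{i,e} ≤ 1` on matched edges, then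
`Σ_i Σ_e d(i,e)·x̃_{i,e} ≤ 2·Σ_i Σ_e d(i,e)·x_{i,e} + Σ_{e∈M} d(e)`. -/
theorem stmt11 {F V : Type*} [Fintype F] [Fintype V] [DecidableEq V]
    (d : F ⊕ V → F ⊕ V → ℝ)
    (hdnonneg : ∀ a b, 0 ≤ d a b)
    (hself : ∀ a, d a a = 0)
    (hsymm : ∀ a b, d a b = d b a)
    (htri : ∀ a b c, d a c ≤ d a b + d b c)
    (dfe : F → Sym2 V → ℝ)
    (hdfe : ∀ i j k, dfe i s(j, k) = d (Sum.inl i) (Sum.inr j) + d (Sum.inl i) (Sum.inr k))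
    (de : Sym2 V → ℝ)
    (hde : ∀ j k, de s(j, k) = d (Sum.inr j) (Sum.inr k))
    (E M : Finset (Sym2 V)) (hE : ∀ e ∈ E, ¬ e.IsDiag)
    (hM : IsMatchingIn E M)
    (x xt : F → Sym2 V → ℝ) (τ : F → Sym2 V → Sym2 V → ℝ)
    (hx : ∀ i e, 0 ≤ x i e)
    (hτ : ∀ i e' e, 0 ≤ τ i e' e)
    (hτsum : ∀ i : F, ∀ e' ∈ E \ M,
      ∑ e ∈ M.filter (fun e => ∃ v : V, v ∈ e ∧ v ∈ e'), τ i e' e = x i e')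
    (hxtdef : ∀ i : F, ∀ e ∈ M,
      xt i e = x i e + ∑ e' ∈ (E \ M).filter (fun e' => ∃ v : V, v ∈ e ∧ v ∈ e'), τ i e' e)
    (hxt0 : ∀ i : F, ∀ e : Sym2 V, e ∉ M → xt i e = 0)
    (hxe : ∀ e ∈ M, ∑ i : F, xt i e ≤ 1) :
    ∑ i : F, ∑ e ∈ E, dfe i e * xt i e ≤
      2 * (∑ i : F, ∑ e ∈ E, dfe i e * x i e) + ∑ e ∈ M, de e := by
  have hME : M ⊆ E := hM.1
  -- nonnegativity of dfe and de
  have hdfe_nn : ∀ i e, 0 ≤ dfe i e := by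
    intro i e
    induction e using Sym2.ind with
    | _ j k => rw [hdfe]; exact add_nonneg (hdnonneg _ _) (hdnonneg _ _)
  have hde_nn : ∀ e, 0 ≤ de e := by
    intro e
    induction e using Sym2.ind with
    | _ j k => rw [hde]; exact hdnonneg _ _
  -- key inequality
  have key : ∀ (i : F) (e e' : Sym2 V) (v : V), v ∈ e → v ∈ e' →
      dfe i e ≤ 2 * dfe i e' + de e := by
    intro i e e' v hv hv'
    obtain ⟨w, rfl⟩ := Sym2.mem_iff_exists.mp hv
    obtain ⟨u, rfl⟩ := Sym2.mem_iff_exists.mp hv'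
    rw [hdfe, hdfe, hde]
    have h1 : d (Sum.inl i) (Sum.inr w) ≤
        d (Sum.inl i) (Sum.inr v) + d (Sum.inr v) (Sum.inr w) := htri _ _ _
    have h2 : 0 ≤ d (Sum.inl i) (Sum.inr u) := hdnonneg _ _
    linarith
  -- notation for neighbor sets
  set N : Sym2 V → Finset (Sym2 V) :=
    fun e => (E \ M).filter (fun e' => ∃ v : V, v ∈ e ∧ v ∈ e') with hN
  have adj : ∀ e e', e' ∈ N e → ∃ v : V, v ∈ e ∧ v ∈ e' := by
    intro e e' h
    exact (Finset.mem_filter.mp h).2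
  -- swap double filtered sums
  have swap : ∀ f : Sym2 V → Sym2 V → ℝ,
      ∑ e ∈ M, ∑ e' ∈ N e, f e e'
      = ∑ e' ∈ E \ M, ∑ e ∈ M.filter (fun e => ∃ v : V, v ∈ e ∧ v ∈ e'), f e e' := by
    intro f
    simp only [hN, Finset.sum_filter]
    exact Finset.sum_comm
  -- restrict LHS to M
  have hLHS : ∑ i : F, ∑ e ∈ E, dfe i e * xt i e
      = ∑ i : F, (∑ e ∈ M, dfe i e * x i e + ∑ e ∈ M, ∑ e' ∈ N e, dfe i e * τ i e' e) := by
    refine Finset.sum_congr rfl fun i _ => ?_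
    rw [← (Finset.sum_subset hME (fun e _ he => by rw [hxt0 i e he, mul_zero]))]
    rw [← Finset.sum_add_distrib]
    refine Finset.sum_congr rfl fun e he => ?_
    rw [hxtdef i e he, mul_add, Finset.mul_sum]
  -- bound the transfer term
  have hT : ∀ i : F, ∑ e ∈ M, ∑ e' ∈ N e, dfe i e * τ i e' e
      ≤ 2 * ∑ e ∈ E \ M, dfe i e * x i e
        + ∑ e ∈ M, ∑ e' ∈ N e, de e * τ i e' e := by
    intro i
    have step1 : ∑ e ∈ M, ∑ e' ∈ N e, dfe i e * τ i e' e
        ≤ ∑ e ∈ M, ∑ e' ∈ N e, (2 * dfe i e' + de e) * τ i e' e := by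
      refine Finset.sum_le_sum fun e _ => Finset.sum_le_sum fun e' he' => ?_
      obtain ⟨v, hv, hv'⟩ := adj e e' he'
      exact mul_le_mul_of_nonneg_right (key i e e' v hv hv') (hτ i e' e)
    have step2 : ∑ e ∈ M, ∑ e' ∈ N e, (2 * dfe i e' + de e) * τ i e' e
        = 2 * ∑ e ∈ M, ∑ e' ∈ N e, dfe i e' * τ i e' e
          + ∑ e ∈ M, ∑ e' ∈ N e, de e * τ i e' e := by
      rw [Finset.mul_sum, ← Finset.sum_add_distrib]
      refine Finset.sum_congr rfl fun e _ => ?_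
      rw [Finset.mul_sum, ← Finset.sum_add_distrib]
      refine Finset.sum_congr rfl fun e' _ => by ring
    have step3 : ∑ e ∈ M, ∑ e' ∈ N e, dfe i e' * τ i e' e
        = ∑ e' ∈ E \ M, dfe i e' * x i e' := by
      rw [swap (fun e e' => dfe i e' * τ i e' e)]
      refine Finset.sum_congr rfl fun e' he' => ?_
      rw [← Finset.mul_sum, hτsum i e' he']
    linarith [step1, step2, step3.ge, step3.le]
  -- bound the de term
  have hD : ∑ i : F, ∑ e ∈ M, ∑ e' ∈ N e, de e * τ i e' e ≤ ∑ e ∈ M, de e := by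
    rw [Finset.sum_comm]
    refine Finset.sum_le_sum fun e he => ?_
    have h1 : ∑ i : F, ∑ e' ∈ N e, de e * τ i e' e
        = de e * ∑ i : F, ∑ e' ∈ N e, τ i e' e := by
      rw [Finset.mul_sum]
      exact Finset.sum_congr rfl fun i _ => (Finset.mul_sum _ _ _).symm
    rw [h1]
    have h2 : ∑ i : F, ∑ e' ∈ N e, τ i e' e ≤ 1 := by
      have := hxe e he
      have h3 : ∑ i : F, ∑ e' ∈ N e, τ i e' e ≤ ∑ i : F, xt i e := by
        refine Finset.sum_le_sum fun i _ => ?_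
        rw [hxtdef i e he]
        linarith [hx i e]
      linarith
    calc de e * ∑ i : F, ∑ e' ∈ N e, τ i e' e ≤ de e * 1 :=
          mul_le_mul_of_nonneg_left h2 (hde_nn e)
      _ = de e := mul_one _
  -- assemble
  have hsplit : ∀ i : F, ∑ e ∈ E, dfe i e * x i e
      = ∑ e ∈ E \ M, dfe i e * x i e + ∑ e ∈ M, dfe i e * x i e := by
    intro i; exact (Finset.sum_sdiff hME).symm
  have hMnn : ∀ i : F, 0 ≤ ∑ e ∈ M, dfe i e * x i e := by
    intro i
    exact Finset.sum_nonneg fun e _ => mul_nonneg (hdfe_nn i e) (hx i e)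
  rw [hLHS]
  have final : ∑ i : F, (∑ e ∈ M, dfe i e * x i e + ∑ e ∈ M, ∑ e' ∈ N e, dfe i e * τ i e' e)
      ≤ ∑ i : F, (∑ e ∈ M, dfe i e * x i e + 2 * ∑ e ∈ E \ M, dfe i e * x i e
          + ∑ e ∈ M, ∑ e' ∈ N e, de e * τ i e' e) := by
    refine Finset.sum_le_sum fun i _ => ?_
    have := hT i
    linarith
  refine final.trans ?_
  have expand : ∑ i : F, (∑ e ∈ M, dfe i e * x i e + 2 * ∑ e ∈ E \ M, dfe i e * x i e
          + ∑ e ∈ M, ∑ e' ∈ N e, de e * τ i e' e)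
      = (∑ i : F, (∑ e ∈ M, dfe i e * x i e + 2 * ∑ e ∈ E \ M, dfe i e * x i e))
        + ∑ i : F, ∑ e ∈ M, ∑ e' ∈ N e, de e * τ i e' e := by
    rw [← Finset.sum_add_distrib]
  rw [expand]
  have hmain : ∑ i : F, (∑ e ∈ M, dfe i e * x i e + 2 * ∑ e ∈ E \ M, dfe i e * x i e)
      ≤ 2 * ∑ i : F, ∑ e ∈ E, dfe i e * x i e := by
    rw [Finset.mul_sum]
    refine Finset.sum_le_sum fun i _ => ?_
    rw [hsplit i]
    have := hMnn i
    linarith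
  linarith [hD, hmain]
end

section
/- Let M be a perfect matching of G = (V,E), d a metric on F ∪ V, and for each i ∈ F and e = {j,k} ∈ M let x̃_{i,e} := x_{i,e} + (1/2)[Σ_{e' ∈ δ(j)\{e}} x_{i,e'} + Σ_{e' ∈ δ(k)\{e}} x_{i,e'}], with x̃_{i,e'} := 0 for e' ∉ M. If x̃_e := Σ_i x̃_{i,e} ≤ 1 for every e ∈ M, then Σ_i Σ_{e∈E} d(i,e)·x̃_{i,e} ≤ Σ_i Σ_{e∈E} d(i,e)·x_{i,e} + Σ_{e∈M} d(e). -/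
/-- `M` is a perfect matching in the graph with edge set `E`. -/
def IsPerfectMatchingIn {V : Type*} (E M : Finset (Sym2 V)) : Prop :=
  IsMatchingIn E M ∧ ∀ v : V, ∃ e ∈ M, v ∈ e

/-- The endpoints of an edge as a finset. -/
def SymEnds {V : Type*} [Fintype V] [DecidableEq V] (e : Sym2 V) : Finset V :=
  Finset.univ.filter (fun v => v ∈ e)

lemma symEnds_pair {V : Type*} [Fintype V] [DecidableEq V] {j k : V} (h : j ≠ k) :
    SymEnds s(j, k) = {j, k} := by
  ext v
  simp [SymEnds, Sym2.mem_iff]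

lemma sum_symEnds_pair {V : Type*} [Fintype V] [DecidableEq V] {j k : V} (h : j ≠ k)
    (t : V → ℝ) : ∑ v ∈ SymEnds s(j, k), t v = t j + t k := by
  rw [symEnds_pair h, Finset.sum_pair h]

lemma sum_partition_pm {V : Type*} [Fintype V] [DecidableEq V] {E M : Finset (Sym2 V)}
    (hM : IsPerfectMatchingIn E M) (t : V → ℝ) :
    ∑ v, t v = ∑ e ∈ M, ∑ v ∈ SymEnds e, t v := by
  rw [← Finset.sum_biUnion]
  · apply Finset.sum_congr _ (fun _ _ => rfl)
    ext v
    simp only [Finset.mem_biUnion, SymEnds, Finset.mem_filter, Finset.mem_univ, true_and]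
    exact iff_of_true trivial (hM.2 v)
  · intro e₁ h₁ e₂ h₂ hne
    simp only [Finset.disjoint_left, SymEnds, Finset.mem_filter, Finset.mem_univ, true_and]
    intro v hv1 hv2
    exact hM.1.2 e₁ (by simpa using h₁) e₂ (by simpa using h₂) hne v hv1 hv2

lemma sum_swap_symEnds {V : Type*} [Fintype V] [DecidableEq V] (S : Finset (Sym2 V))
    (f : V → Sym2 V → ℝ) :
    ∑ v, ∑ e ∈ S.filter (fun e => v ∈ e), f v e = ∑ e ∈ S, ∑ v ∈ SymEnds e, f v e := by
  simp only [Finset.sum_filter, SymEnds]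
  rw [Finset.sum_comm]

/-- For a perfect matching `M`, a metric `d` on `F ∪ V`, and
`x̃_{i,e} := x_{i,e} + (1/2)[Σ_{e'∈δ(j)\{e}} x_{i,e'} + Σ_{e'∈δ(k)\{e}} x_{i,e'}]`
on matched edges `e = {j,k}` (zero elsewhere), if `x̃_e := Σ_i x̃_{i,e} ≤ 1` on
matched edges, then
`Σ_i Σ_e d(i,e)·x̃_{i,e} ≤ Σ_i Σ_e d(i,e)·x_{i,e} + Σ_{e∈M} d(e)`. -/
theorem stmt13 {F V : Type*} [Fintype F] [Fintype V] [DecidableEq V]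
    (d : F ⊕ V → F ⊕ V → ℝ)
    (hdnonneg : ∀ a b, 0 ≤ d a b)
    (hself : ∀ a, d a a = 0)
    (hsymm : ∀ a b, d a b = d b a)
    (htri : ∀ a b c, d a c ≤ d a b + d b c)
    (dfe : F → Sym2 V → ℝ)
    (hdfe : ∀ i j k, dfe i s(j, k) = d (Sum.inl i) (Sum.inr j) + d (Sum.inl i) (Sum.inr k))
    (de : Sym2 V → ℝ)
    (hde : ∀ j k, de s(j, k) = d (Sum.inr j) (Sum.inr k))
    (E M : Finset (Sym2 V)) (hE : ∀ e ∈ E, ¬ e.IsDiag)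
    (hM : IsPerfectMatchingIn E M)
    (x xt : F → Sym2 V → ℝ)
    (hx : ∀ i e, 0 ≤ x i e)
    (hxtdef : ∀ i : F, ∀ j k : V, s(j, k) ∈ M →
      xt i s(j, k) = x i s(j, k)
        + (1 / 2) * (∑ e' ∈ (E.filter (fun e' => j ∈ e')).erase s(j, k), x i e'
          + ∑ e' ∈ (E.filter (fun e' => k ∈ e')).erase s(j, k), x i e'))
    (hxt0 : ∀ i : F, ∀ e : Sym2 V, e ∉ M → xt i e = 0)
    (hxe : ∀ e ∈ M, ∑ i : F, xt i e ≤ 1) :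
    ∑ i : F, ∑ e ∈ E, dfe i e * xt i e ≤
      ∑ i : F, ∑ e ∈ E, dfe i e * x i e + ∑ e ∈ M, de e := by
  classical
  -- basic facts
  have hMsub : M ⊆ E := hM.1.1
  have hMnd : ∀ e ∈ M, ¬ e.IsDiag := fun e he => hE e (hMsub he)
  obtain ⟨⟨_, hmatch⟩, hperf⟩ := hM
  -- the matched edge of each vertex
  choose m hm1 hm2 using hperf
  have hmu : ∀ (v : V) (e : Sym2 V), e ∈ M → v ∈ e → e = m v := by
    intro v e he hv
    by_contra hne
    exact hmatch e he (m v) (hm1 v) hne v hv (hm2 v)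
  -- δ(v) \ {m v} consists of unmatched edges at v
  have hdelta : ∀ v : V,
      (E.filter (fun e' => v ∈ e')).erase (m v) = (E \ M).filter (fun e' => v ∈ e') := by
    intro v
    ext e'
    simp only [Finset.mem_erase, Finset.mem_filter, Finset.mem_sdiff]
    constructor
    · rintro ⟨hne, hE', hv⟩
      refine ⟨⟨hE', fun hmem => hne (hmu v e' hmem hv)⟩, hv⟩
    · rintro ⟨⟨hE', hnM⟩, hv⟩
      exact ⟨fun h => hnM (h ▸ hm1 v), hE', hv⟩
  -- nonnegativity of edge lengths
  have hde0 : ∀ e : Sym2 V, 0 ≤ de e := by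
    intro e
    induction e using Sym2.ind with
    | _ a b => rw [hde]; exact hdnonneg _ _
  have hdfe0 : ∀ i (e : Sym2 V), 0 ≤ dfe i e := by
    intro i e
    induction e using Sym2.ind with
    | _ a b => rw [hdfe]; exact add_nonneg (hdnonneg _ _) (hdnonneg _ _)
  -- key triangle inequality: for u ∈ e, dfe i e ≤ 2 d(i,u) + de e
  have key : ∀ (i : F) (u : V) (e : Sym2 V), u ∈ e →
      dfe i e ≤ 2 * d (Sum.inl i) (Sum.inr u) + de e := by
    intro i u e hu
    induction e using Sym2.ind with
    | _ a b =>
      rw [hdfe, hde]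
      rcases Sym2.mem_iff.mp hu with rfl | rfl
      · linarith [htri (Sum.inl i) (Sum.inr u) (Sum.inr b)]
      · linarith [htri (Sum.inl i) (Sum.inr u) (Sum.inr a),
          hsymm (Sum.inr u) (Sum.inr a)]
  -- restate the definition of xt with ends-sum
  have hxtdef' : ∀ i, ∀ e ∈ M, xt i e = x i e
      + (1 / 2) * ∑ v ∈ SymEnds e, ∑ e' ∈ (E.filter (fun e' => v ∈ e')).erase e, x i e' := by
    intro i e he
    induction e using Sym2.ind with
    | _ j k =>
      have hjk : j ≠ k := by
        have := hMnd _ he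
        simpa [Sym2.mk_isDiag_iff] using this
      rw [hxtdef i j k he,
        sum_symEnds_pair hjk (fun v => ∑ e' ∈ (E.filter (fun e' => v ∈ e')).erase s(j, k), x i e')]
  -- reindexing lemma
  have reindex : ∀ (c w : Sym2 V → ℝ),
      ∑ e ∈ M, c e * ∑ v ∈ SymEnds e, ∑ e' ∈ (E.filter (fun e' => v ∈ e')).erase e, w e'
      = ∑ e' ∈ E \ M, (∑ v ∈ SymEnds e', c (m v)) * w e' := by
    intro c w
    have step1 : ∀ e ∈ M,
        c e * ∑ v ∈ SymEnds e, ∑ e' ∈ (E.filter (fun e' => v ∈ e')).erase e, w e'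
        = ∑ v ∈ SymEnds e, ∑ e' ∈ (E \ M).filter (fun e' => v ∈ e'), c (m v) * w e' := by
      intro e he
      rw [Finset.mul_sum]
      refine Finset.sum_congr rfl fun v hv => ?_
      have hvE : v ∈ e := (Finset.mem_filter.mp hv).2
      have hme : e = m v := hmu v e he hvE
      rw [hme, hdelta v, Finset.mul_sum]
    rw [Finset.sum_congr rfl step1,
      ← sum_partition_pm ⟨⟨hMsub, hmatch⟩, fun v => ⟨m v, hm1 v, hm2 v⟩⟩
        (fun v => ∑ e' ∈ (E \ M).filter (fun e' => v ∈ e'), c (m v) * w e'),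
      sum_swap_symEnds (E \ M) (fun v e' => c (m v) * w e')]
    refine Finset.sum_congr rfl fun e' _ => ?_
    rw [Finset.sum_mul]
  -- step 1: restrict the left side to M and expand
  have hL : ∀ i, ∑ e ∈ E, dfe i e * xt i e
      = ∑ e ∈ M, dfe i e * x i e
        + ∑ e' ∈ E \ M, (∑ v ∈ SymEnds e', (1 / 2) * dfe i (m v)) * x i e' := by
    intro i
    rw [← Finset.sum_subset hMsub (fun e _ hne => by rw [hxt0 i e hne, mul_zero])]
    rw [← reindex (fun e => (1 / 2) * dfe i e) (x i), ← Finset.sum_add_distrib]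
    refine Finset.sum_congr rfl fun e he => ?_
    rw [hxtdef' i e he]
    ring
  -- step 2: bound via triangle inequality on unmatched edges
  have hBound : ∀ i, ∀ e' ∈ E \ M,
      (∑ v ∈ SymEnds e', (1 / 2) * dfe i (m v)) * x i e'
      ≤ (dfe i e' + ∑ v ∈ SymEnds e', (1 / 2) * de (m v)) * x i e' := by
    intro i e' he'
    have he'E : e' ∈ E := (Finset.mem_sdiff.mp he').1
    refine mul_le_mul_of_nonneg_right ?_ (hx i e')
    induction e' using Sym2.ind with
    | _ u v =>
      have huv : u ≠ v := by
        have := hE _ he'E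
        simpa [Sym2.mk_isDiag_iff] using this
      rw [sum_symEnds_pair huv (fun w => (1 / 2) * dfe i (m w)),
        sum_symEnds_pair huv (fun w => (1 / 2) * de (m w)), hdfe]
      have h1 := key i u (m u) (hm2 u)
      have h2 := key i v (m v) (hm2 v)
      linarith
  -- step 3: the remainder term equals the de-weighted deficiency
  have hR : ∀ i, ∑ e' ∈ E \ M, (∑ v ∈ SymEnds e', (1 / 2) * de (m v)) * x i e'
      = ∑ e ∈ M, de e * (xt i e - x i e) := by
    intro i
    rw [← reindex (fun e => (1 / 2) * de e) (x i)]
    refine Finset.sum_congr rfl fun e he => ?_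
    rw [hxtdef' i e he]
    ring
  -- assemble
  calc ∑ i : F, ∑ e ∈ E, dfe i e * xt i e
      = ∑ i : F, (∑ e ∈ M, dfe i e * x i e
          + ∑ e' ∈ E \ M, (∑ v ∈ SymEnds e', (1 / 2) * dfe i (m v)) * x i e') :=
        Finset.sum_congr rfl fun i _ => hL i
    _ ≤ ∑ i : F, (∑ e ∈ M, dfe i e * x i e
          + ∑ e' ∈ E \ M, (dfe i e' + ∑ v ∈ SymEnds e', (1 / 2) * de (m v)) * x i e') := by
        refine Finset.sum_le_sum fun i _ => ?_
        exact add_le_add_right (Finset.sum_le_sum fun e' he' => hBound i e' he') _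
    _ = ∑ i : F, (∑ e ∈ E, dfe i e * x i e + ∑ e ∈ M, de e * (xt i e - x i e)) := by
        refine Finset.sum_congr rfl fun i _ => ?_
        have hsplit : ∑ e' ∈ E \ M, (dfe i e' + ∑ v ∈ SymEnds e', (1 / 2) * de (m v)) * x i e'
            = ∑ e' ∈ E \ M, dfe i e' * x i e'
              + ∑ e' ∈ E \ M, (∑ v ∈ SymEnds e', (1 / 2) * de (m v)) * x i e' := by
          rw [← Finset.sum_add_distrib]
          exact Finset.sum_congr rfl fun e' _ => by ring
        rw [hsplit, hR i, ← Finset.sum_sdiff hMsub (f := fun e => dfe i e * x i e)]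
        ring
    _ = ∑ i : F, ∑ e ∈ E, dfe i e * x i e + ∑ e ∈ M, de e * (∑ i : F, xt i e - ∑ i : F, x i e) := by
        rw [Finset.sum_add_distrib]
        congr 1
        rw [Finset.sum_comm]
        refine Finset.sum_congr rfl fun e _ => ?_
        rw [← Finset.mul_sum, Finset.sum_sub_distrib]
    _ ≤ ∑ i : F, ∑ e ∈ E, dfe i e * x i e + ∑ e ∈ M, de e := by
        refine add_le_add_right (Finset.sum_le_sum fun e he => ?_) _
        have h1 : ∑ i : F, xt i e - ∑ i : F, x i e ≤ 1 := by
          have := hxe e he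
          have hx0 : 0 ≤ ∑ i : F, x i e := Finset.sum_nonneg fun i _ => hx i e
          linarith
        calc de e * (∑ i : F, xt i e - ∑ i : F, x i e) ≤ de e * 1 :=
              mul_le_mul_of_nonneg_left h1 (hde0 e)
          _ = de e := mul_one _
end

section
/- There is an approximation-preserving reduction from UFL to FLM: given a UFL instance (F, C, f, d), construct the FLM instance with facility set F, opening costs 2f, client set consisting of two co-located copies c, c̄ of each client c ∈ C, compatibility edges {c, c̄} only, and the metric extending d with d(c, c̄) = 0. Then feasible solutions of cost k in the UFL instance correspond exactly (bijectively, up to cost) to feasible solutions of cost 2k in the FLM instance; in particular, the optimal FLM cost equals twice the optimal UFL cost. -/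
/-- Approximation-preserving reduction from UFL to FLM. Given a
UFL instance `(F, C, f, d)`, build the FLM instance with facilities `F`,
opening costs `2f`, clients `C ⊕ C` (two co-located copies of each client,
with distances `D i (inl c) = D i (inr c) = d i c`), and compatibility edges
`{c, c̄}` only — so the unique maximum matching is the set of all copy-pairs,
and an FLM solution is a nonempty set `S` of open facilities together with an
assignment `σ` of each matched pair `{c, c̄}` to an open facility, of cost
`Σ_{i∈S} 2f(i) + Σ_c (D(σ c, inl c) + D(σ c, inr c))`. Then every FLM
solution on `S` costs at least twice the UFL cost of `S`, and this is attained
by some assignment: solutions of UFL cost `k` correspond exactly to FLM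
solutions of cost `2k`, and in particular the optimal FLM cost equals twice
the optimal UFL cost. -/
theorem stmt19 {F C : Type*} [Fintype F] [Fintype C] [DecidableEq F]
    (f : F → ℝ) (hf : ∀ i, 0 ≤ f i)
    (d : F → C → ℝ) (hd : ∀ i c, 0 ≤ d i c)
    (hthree : ∀ (i i' : F) (c c' : C), d i c ≤ d i c' + d i' c' + d i' c)
    (D : F → C ⊕ C → ℝ)
    (hD : ∀ i c, D i (Sum.inl c) = d i c ∧ D i (Sum.inr c) = d i c)
    (UFLcost : Finset F → ℝ)
    (hUFL : ∀ (S : Finset F) (hS : S.Nonempty),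
      UFLcost S = ∑ i ∈ S, f i + ∑ c : C, S.inf' hS (fun i => d i c))
    (FLMcost : Finset F → (C → F) → ℝ)
    (hFLM : ∀ (S : Finset F) (σ : C → F),
      FLMcost S σ = ∑ i ∈ S, 2 * f i
        + ∑ c : C, (D (σ c) (Sum.inl c) + D (σ c) (Sum.inr c))) :
    ∀ (S : Finset F) (hS : S.Nonempty),
      (∀ σ : C → F, (∀ c, σ c ∈ S) → 2 * UFLcost S ≤ FLMcost S σ) ∧
      (∃ σ : C → F, (∀ c, σ c ∈ S) ∧ FLMcost S σ = 2 * UFLcost S) := by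

  intro S hS
  have key : ∀ σ : C → F, FLMcost S σ =
      2 * (∑ i ∈ S, f i + ∑ c : C, d (σ c) c) := by
    intro σ
    rw [hFLM]
    simp only [(hD _ _).1, (hD _ _).2]
    rw [mul_add, Finset.mul_sum, Finset.mul_sum]
    congr 1
    exact Finset.sum_congr rfl fun c _ => (two_mul _).symm
  constructor
  · intro σ hσ
    rw [key, hUFL S hS]
    have : ∑ c : C, S.inf' hS (fun i => d i c) ≤ ∑ c : C, d (σ c) c :=
      Finset.sum_le_sum fun c _ => Finset.inf'_le _ (hσ c)
    nlinarith
  · choose σ hσ hval using fun c : C => S.exists_mem_eq_inf' hS (fun i => d i c)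
    refine ⟨σ, hσ, ?_⟩
    rw [key, hUFL S hS]
    congr 2
    exact Finset.sum_congr rfl fun c _ => (hval c).symm
end
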